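/- Fix λ > 0, H > 0, L > 0, real numbers Ω ≠ 0 and Ψ ≠ 0, and p₁ ≥ 0. For d > 0 let I₁₂²(d) = (d⁴/(H²L²)) · (sin²(πHΩ/λ)/sin²(πdΩ/λ)) · (sin²(πLΨ/λ)/sin²(πdΨ/λ)). Then the zero-forcing SINR of user 1 converges: lim_{d→0⁺} p₁LH·(1 − I₁₂²(d)) = p₁LH·(1 − sinc²(HΩ/λ)·sinc²(LΨ/λ)). -/

import Mathlib

open Filter Real Topology

/-- `sinc x = sin(πx)/(πx)` for `x ≠ 0`, and `sinc 0 = 1`. -/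
noncomputable def sinc (x : ℝ) : ℝ :=
  if x = 0 then 1 else Real.sin (Real.pi * x) / (Real.pi * x)

lemma sin_div_tendsto_one (c : ℝ) (hc : c ≠ 0) :
    Tendsto (fun d : ℝ => Real.sin (c * d) / (c * d)) (𝓝[>] (0:ℝ)) (𝓝 1) := by
  have h1 : Tendsto (fun x : ℝ => Real.sin x / x) (𝓝[≠] (0:ℝ)) (𝓝 1) := by
    have h := Real.hasDerivAt_sin 0
    rw [hasDerivAt_iff_tendsto_slope] at h
    simpa [slope_fun_def, Real.sin_zero, sub_zero, div_eq_inv_mul] using h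
  have h2 : Tendsto (fun d : ℝ => c * d) (𝓝[>] (0:ℝ)) (𝓝[≠] (0:ℝ)) := by
    rw [tendsto_nhdsWithin_iff]
    constructor
    · have : Tendsto (fun d : ℝ => c * d) (𝓝 (0:ℝ)) (𝓝 (c * 0)) :=
        (continuous_const.mul continuous_id).tendsto 0
      simpa using this.mono_left nhdsWithin_le_nhds
    · filter_upwards [self_mem_nhdsWithin] with d hd
      exact mul_ne_zero hc (ne_of_gt hd)
  exact h1.comp h2

/-- Eq. (21): as `d → 0⁺`, the zero-forcing SINR of user 1 converges to
`p₁LH · (1 - sinc²(HΩ/λ) · sinc²(LΨ/λ))`. -/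
theorem limiting_zf_sinr (lam H L Ω Ψ p₁ : ℝ)
    (hlam : 0 < lam) (hH : 0 < H) (hL : 0 < L) (hΩ : Ω ≠ 0) (hΨ : Ψ ≠ 0)
    (hp₁ : 0 ≤ p₁) :
    Filter.Tendsto
      (fun d : ℝ =>
        p₁ * L * H *
          (1 - d ^ 4 / (H ^ 2 * L ^ 2) *
            (Real.sin (Real.pi * H * Ω / lam) ^ 2 / Real.sin (Real.pi * d * Ω / lam) ^ 2) *
            (Real.sin (Real.pi * L * Ψ / lam) ^ 2 / Real.sin (Real.pi * d * Ψ / lam) ^ 2)))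
      (nhdsWithin 0 (Set.Ioi 0))
      (nhds (p₁ * L * H * (1 - _root_.sinc (H * Ω / lam) ^ 2 * _root_.sinc (L * Ψ / lam) ^ 2))) := by
  have hlam' : lam ≠ 0 := ne_of_gt hlam
  have hpi : Real.pi ≠ 0 := Real.pi_ne_zero
  set c : ℝ := Real.pi * Ω / lam with hcdef
  set c' : ℝ := Real.pi * Ψ / lam with hc'def
  have hc : c ≠ 0 := by
    simp only [hcdef, div_ne_zero_iff]
    exact ⟨mul_ne_zero hpi hΩ, hlam'⟩
  have hc' : c' ≠ 0 := by
    simp only [hc'def, div_ne_zero_iff]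
    exact ⟨mul_ne_zero hpi hΨ, hlam'⟩
  set A : ℝ := Real.sin (Real.pi * H * Ω / lam) ^ 2 with hAdef
  set B : ℝ := Real.sin (Real.pi * L * Ψ / lam) ^ 2 with hBdef
  set K : ℝ := A / (H * c) ^ 2 * (B / (L * c') ^ 2) with hKdef
  -- K is the limit of the interference term
  have hKval : K = _root_.sinc (H * Ω / lam) ^ 2 * _root_.sinc (L * Ψ / lam) ^ 2 := by
    have h1 : H * Ω / lam ≠ 0 := div_ne_zero (mul_ne_zero (ne_of_gt hH) hΩ) hlam'
    have h2 : L * Ψ / lam ≠ 0 := div_ne_zero (mul_ne_zero (ne_of_gt hL) hΨ) hlam'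
    rw [hKdef, _root_.sinc, _root_.sinc, if_neg h1, if_neg h2, hAdef, hBdef, hcdef, hc'def]
    have e1 : Real.pi * (H * Ω / lam) = Real.pi * H * Ω / lam := by ring
    have e2 : Real.pi * (L * Ψ / lam) = Real.pi * L * Ψ / lam := by ring
    rw [e1, e2]
    field_simp
  -- the auxiliary function
  have key : Tendsto
      (fun d : ℝ => p₁ * L * H *
        (1 - K * ((Real.sin (c * d) / (c * d))⁻¹) ^ 2 *
          ((Real.sin (c' * d) / (c' * d))⁻¹) ^ 2))
      (𝓝[>] (0:ℝ))
      (𝓝 (p₁ * L * H * (1 - K * ((1:ℝ)⁻¹) ^ 2 * ((1:ℝ)⁻¹) ^ 2))) := by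
    have t1 := ((sin_div_tendsto_one c hc).inv₀ one_ne_zero).pow 2
    have t2 := ((sin_div_tendsto_one c' hc').inv₀ one_ne_zero).pow 2
    exact (tendsto_const_nhds.sub (((t1.const_mul K).mul t2))).const_mul _
  have hval : p₁ * L * H * (1 - K * ((1:ℝ)⁻¹) ^ 2 * ((1:ℝ)⁻¹) ^ 2)
      = p₁ * L * H * (1 - _root_.sinc (H * Ω / lam) ^ 2 * _root_.sinc (L * Ψ / lam) ^ 2) := by
    rw [hKval]; norm_num
  rw [← hval]
  refine key.congr' ?_
  filter_upwards [self_mem_nhdsWithin] with d hd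
  have hd0 : d ≠ 0 := ne_of_gt hd
  have e1 : Real.pi * d * Ω / lam = c * d := by rw [hcdef]; ring
  have e2 : Real.pi * d * Ψ / lam = c' * d := by rw [hc'def]; ring
  simp only [e1, e2]
  congr 1
  congr 1
  rw [hKdef]
  by_cases hs : Real.sin (c * d) = 0
  · simp [hs, hd0, div_zero]
  · by_cases ht : Real.sin (c' * d) = 0
    · simp [ht, hd0, div_zero]
    · have hcd : c * d ≠ 0 := mul_ne_zero hc hd0
      have hc'd : c' * d ≠ 0 := mul_ne_zero hc' hd0
      field_simp
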